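/- Let X₁, …, Xₙ be independent real-valued random variables with E[Xᵢ] = 0 and E[|Xᵢ|^r] < ∞ for some 1 ≤ r ≤ 2. Let Sₙ = X₁ + ⋯ + Xₙ. Then E[|Sₙ|^r] ≤ 2 ∑_{i=1}^n E[|Xᵢ|^r]. -/

import Mathlib

open MeasureTheory ProbabilityTheory

private lemma vbe_rpow_subadd {a b p : ℝ} (ha : 0 ≤ a) (hb : 0 ≤ b) (hp : 0 ≤ p) (hp1 : p ≤ 1) :
    (a + b) ^ p ≤ a ^ p + b ^ p := by
  have h := NNReal.rpow_add_le_add_rpow a.toNNReal b.toNNReal hp hp1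
  rw [← Real.toNNReal_add ha hb] at h
  have h2 := NNReal.coe_le_coe.2 h
  rwa [NNReal.coe_add, NNReal.coe_rpow, NNReal.coe_rpow, NNReal.coe_rpow,
    Real.coe_toNNReal _ (by positivity), Real.coe_toNNReal _ ha, Real.coe_toNNReal _ hb] at h2

private lemma vbe_rpow_tangent {a b r : ℝ} (ha : 0 ≤ a) (hb : 0 < b) (hr : 1 ≤ r) :
    b ^ r ≤ a ^ r + r * b ^ (r - 1) * (b - a) := by
  have hs : -1 ≤ a / b - 1 := by
    have : 0 ≤ a / b := div_nonneg ha hb.le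
    linarith
  have h := one_add_mul_self_le_rpow_one_add hs hr
  have hbr : (0:ℝ) < b ^ r := Real.rpow_pos_of_pos hb r
  have h2 : (1 + r * (a / b - 1)) * b ^ r ≤ a ^ r := by
    calc (1 + r * (a / b - 1)) * b ^ r ≤ (1 + (a / b - 1)) ^ r * b ^ r := by
          exact mul_le_mul_of_nonneg_right h hbr.le
      _ = a ^ r := by
          rw [show 1 + (a / b - 1) = a / b by ring, Real.div_rpow ha hb.le]
          field_simp
  have hrm : b ^ (r - 1) = b ^ r / b := by
    rw [Real.rpow_sub hb, Real.rpow_one]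
  have heq : (1 + r * (a / b - 1)) * b ^ r = b ^ r + r * b ^ (r - 1) * (a - b) := by
    rw [hrm]; field_simp
  rw [heq] at h2
  linarith

private lemma vbe_core {r : ℝ} (hr1 : 1 < r) (hr2 : r ≤ 2) {x : ℝ} (hx : 0 < x) (y : ℝ) :
    |x + y| ^ r ≤ x ^ r + r * (x ^ (r - 1) * y) + 2 * |y| ^ r := by
  have hr0 : (0:ℝ) < r := by linarith
  have hr1' : (0:ℝ) ≤ r - 1 := by linarith
  have hr1'' : r - 1 ≤ 1 := by linarith
  rcases lt_trichotomy (x + y) 0 with hxy | hxy | hxy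
  · -- x + y < 0
    have hy : y < 0 := by linarith
    have hbx : x < -y := by linarith
    have hb0 : (0:ℝ) < -y := by linarith
    have habs : |x + y| = -y - x := by rw [abs_of_neg hxy]; ring
    have hyabs : |y| = -y := abs_of_neg hy
    have h1 : (-y - x) ^ r ≤ (-y) ^ r := Real.rpow_le_rpow (by linarith) (by linarith) hr0.le
    -- Young: r * (x^(r-1) * (-y)) ≤ x^r + (-y)^r
    have h2 : r * (x ^ (r - 1) * (-y)) ≤ x ^ r + (-y) ^ r := by
      have hconj : Real.HolderConjugate r (r / (r - 1)) := by
        exact (Real.holderConjugate_iff_eq_conjExponent hr1).2 rfl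
      have hne : r ≠ 0 := by linarith
      have hne1 : r - 1 ≠ 0 := by linarith
      have hy2 := Real.young_inequality_of_nonneg hb0.le
        (Real.rpow_nonneg hx.le (r - 1)) hconj
      have hxr : (x ^ (r - 1)) ^ (r / (r - 1)) = x ^ r := by
        rw [← Real.rpow_mul hx.le]
        congr 1
        field_simp
      rw [hxr] at hy2
      have hmul := mul_le_mul_of_nonneg_left hy2 hr0.le
      have hsimp : r * ((-y) ^ r / r + x ^ r / (r / (r - 1))) = (-y) ^ r + (r - 1) * x ^ r := by
        field_simp
      rw [hsimp] at hmul
      have hxr_nonneg : (0:ℝ) ≤ x ^ r := (Real.rpow_pos_of_pos hx r).le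
      nlinarith [hmul]
    rw [habs, hyabs]
    linarith
  · -- x + y = 0
    have hy : y = -x := by linarith
    subst hy
    have h0 : |x + -x| = 0 := by simp
    rw [h0, Real.zero_rpow hr0.ne', abs_neg, abs_of_pos hx]
    have hxx : x ^ (r - 1) * x = x ^ r := by
      have := Real.rpow_add_one hx.ne' (r - 1)
      rw [show r - 1 + 1 = r by ring] at this
      exact this.symm
    have hxr_pos : (0:ℝ) < x ^ r := Real.rpow_pos_of_pos hx r
    nlinarith [hxr_pos]
  · -- 0 < x + y
    have habs : |x + y| = x + y := abs_of_pos hxy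
    have htan : (x + y) ^ r ≤ x ^ r + r * (x + y) ^ (r - 1) * y := by
      have h := vbe_rpow_tangent hx.le hxy hr1.le
      rw [show x + y - x = y by ring] at h
      linarith
    rcases le_or_gt 0 y with hy | hy
    · -- y ≥ 0
      have hsub : (x + y) ^ (r - 1) ≤ x ^ (r - 1) + y ^ (r - 1) :=
        vbe_rpow_subadd hx.le hy hr1' hr1''
      have hyr : y ^ (r - 1) * y = y ^ r := by
        rcases eq_or_lt_of_le hy with h0 | h0
        · rw [← h0, Real.zero_rpow (by linarith : r - 1 ≠ 0), Real.zero_rpow hr0.ne']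
          ring
        · have := Real.rpow_add_one h0.ne' (r - 1)
          rw [show r - 1 + 1 = r by ring] at this
          exact this.symm
      have habs_y : |y| = y := abs_of_nonneg hy
      have hmul : r * (x + y) ^ (r - 1) * y ≤ r * (x ^ (r - 1) + y ^ (r - 1)) * y :=
        mul_le_mul_of_nonneg_right (mul_le_mul_of_nonneg_left hsub hr0.le) hy
      have hyr_nonneg : (0:ℝ) ≤ y ^ r := Real.rpow_nonneg hy r
      have h2r : r * y ^ r ≤ 2 * y ^ r := mul_le_mul_of_nonneg_right hr2 hyr_nonneg
      have hyr' : r * (y ^ (r - 1) * y) = r * y ^ r := by rw [hyr]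
      rw [habs, habs_y]
      nlinarith [htan, hmul, hyr', h2r]
    · -- y < 0
      have hb0 : (0:ℝ) < -y := by linarith
      have hsub : x ^ (r - 1) ≤ (x + y) ^ (r - 1) + (-y) ^ (r - 1) := by
        have h := vbe_rpow_subadd (le_of_lt hxy) hb0.le hr1' hr1''
        rw [show x + y + -y = x by ring] at h
        exact h
      have habs_y : |y| = -y := abs_of_neg hy
      have hyr : (-y) ^ (r - 1) * (-y) = (-y) ^ r := by
        have := Real.rpow_add_one hb0.ne' (r - 1)
        rw [show r - 1 + 1 = r by ring] at this
        exact this.symm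
      have hmul : r * x ^ (r - 1) * (-y) ≤ r * ((x + y) ^ (r - 1) + (-y) ^ (r - 1)) * (-y) :=
        mul_le_mul_of_nonneg_right (mul_le_mul_of_nonneg_left hsub hr0.le) hb0.le
      have hnn : (0:ℝ) ≤ (-y) ^ r := Real.rpow_nonneg hb0.le r
      have h2r : r * (-y) ^ r ≤ 2 * (-y) ^ r := mul_le_mul_of_nonneg_right hr2 hnn
      have hyr' : r * ((-y) ^ (r - 1) * (-y)) = r * (-y) ^ r := by rw [hyr]
      rw [habs, habs_y]
      nlinarith [htan, hmul, hyr', h2r]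

private lemma vbe_ptwise {r : ℝ} (hr1 : 1 ≤ r) (hr2 : r ≤ 2) (x y : ℝ) :
    |x + y| ^ r ≤ |x| ^ r + r * (Real.sign x * |x| ^ (r - 1) * y) + 2 * |y| ^ r := by
  rcases eq_or_lt_of_le hr1 with hr | hr
  · -- r = 1
    subst hr
    simp only [Real.rpow_one, sub_self, Real.rpow_zero, mul_one, one_mul]
    rcases lt_trichotomy x 0 with hx | hx | hx
    · rw [Real.sign_of_neg hx]
      have h1 := abs_add_le x y
      have h2 := le_abs_self y
      linarith
    · subst hx
      rw [Real.sign_zero]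
      have h1 := abs_add_le (0:ℝ) y
      have h2 := abs_nonneg y
      linarith
    · rw [Real.sign_of_pos hx]
      have h1 := abs_add_le x y
      have h2 := neg_abs_le y
      linarith
  · -- 1 < r
    have hr0 : (0:ℝ) < r := by linarith
    rcases lt_trichotomy x 0 with hx | hx | hx
    · have h := vbe_core hr hr2 (neg_pos.2 hx) (-y)
      rw [show -x + -y = -(x + y) by ring, abs_neg, abs_neg] at h
      rw [Real.sign_of_neg hx, abs_of_neg hx]
      have heq : r * (-1 * (-x) ^ (r - 1) * y) = r * ((-x) ^ (r - 1) * -y) := by ring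
      rw [heq]
      exact h
    · subst hx
      rw [Real.sign_zero, abs_zero, Real.zero_rpow hr0.ne']
      have h1 : (0:ℝ) ≤ |0 + y| ^ r := Real.rpow_nonneg (abs_nonneg _) r
      have h2 : |(0:ℝ) + y| = |y| := by rw [zero_add]
      rw [h2]
      have h3 : (0:ℝ) ≤ |y| ^ r := Real.rpow_nonneg (abs_nonneg _) r
      nlinarith
    · rw [Real.sign_of_pos hx, abs_of_pos hx, one_mul]
      exact vbe_core hr hr2 hx y

private lemma vbe_abs_rpow_add_le {r : ℝ} (hr : 1 ≤ r) (a b : ℝ) :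
    |a + b| ^ r ≤ 2 ^ r * (|a| ^ r + |b| ^ r) := by
  have h0 : (0:ℝ) ≤ r := by linarith
  have h1 : |a + b| ≤ 2 * max |a| |b| := by
    have := abs_add_le a b
    have h2 := le_max_left |a| |b|
    have h3 := le_max_right |a| |b|
    linarith
  have hmax0 : (0:ℝ) ≤ max |a| |b| := le_trans (abs_nonneg a) (le_max_left _ _)
  calc |a + b| ^ r ≤ (2 * max |a| |b|) ^ r :=
        Real.rpow_le_rpow (abs_nonneg _) h1 h0
    _ = 2 ^ r * (max |a| |b|) ^ r := Real.mul_rpow (by norm_num) hmax0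
    _ ≤ 2 ^ r * (|a| ^ r + |b| ^ r) := by
        apply mul_le_mul_of_nonneg_left _ (Real.rpow_nonneg (by norm_num) r)
        rcases max_cases |a| |b| with ⟨h, _⟩ | ⟨h, _⟩ <;> rw [h]
        · linarith [Real.rpow_nonneg (abs_nonneg b) r]
        · linarith [Real.rpow_nonneg (abs_nonneg a) r]

private lemma vbe_integrable_add {Ω : Type*} [MeasurableSpace Ω] {P : Measure Ω}
    {r : ℝ} (hr1 : 1 ≤ r) {S Y : Ω → ℝ} (hSm : Measurable S) (hYm : Measurable Y)
    (hSmom : Integrable (fun ω => |S ω| ^ r) P) (hYmom : Integrable (fun ω => |Y ω| ^ r) P) :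
    Integrable (fun ω => |S ω + Y ω| ^ r) P := by
  have hr0 : (0:ℝ) ≤ r := by linarith
  have hmeas : AEStronglyMeasurable (fun ω => |S ω + Y ω| ^ r) P := by
    apply Measurable.aestronglyMeasurable
    exact (Real.continuous_rpow_const hr0).measurable.comp (hSm.add hYm).abs
  refine ((hSmom.add hYmom).const_mul (2 ^ r)).mono hmeas
    (Filter.Eventually.of_forall fun ω => ?_)
  have h1 := vbe_abs_rpow_add_le hr1 (S ω) (Y ω)
  have h2 : (0:ℝ) ≤ |S ω + Y ω| ^ r := Real.rpow_nonneg (abs_nonneg _) r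
  have h3 : (0:ℝ) ≤ 2 ^ r * (|S ω| ^ r + |Y ω| ^ r) := by positivity
  simp only [Real.norm_eq_abs, Pi.add_apply]
  rw [abs_of_nonneg h2, abs_of_nonneg h3]
  exact h1

private lemma vbe_sign_measurable : Measurable Real.sign := by
  unfold Real.sign
  exact Measurable.ite (measurableSet_lt measurable_id measurable_const) measurable_const
    (Measurable.ite (measurableSet_lt measurable_const measurable_id) measurable_const
      measurable_const)

private lemma vbe_step {Ω : Type*} [MeasurableSpace Ω] (P : Measure Ω) [IsProbabilityMeasure P]
    {r : ℝ} (hr1 : 1 ≤ r) (hr2 : r ≤ 2) {S Y : Ω → ℝ}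
    (hSm : Measurable S) (hYm : Measurable Y) (hindep : IndepFun S Y P)
    (hSint : Integrable S P) (hYint : Integrable Y P)
    (hSmom : Integrable (fun ω => |S ω| ^ r) P) (hYmom : Integrable (fun ω => |Y ω| ^ r) P)
    (hYmean : ∫ ω, Y ω ∂P = 0) :
    ∫ ω, |S ω + Y ω| ^ r ∂P ≤ (∫ ω, |S ω| ^ r ∂P) + 2 * ∫ ω, |Y ω| ^ r ∂P := by
  have hr0 : (0:ℝ) < r := by linarith
  have hSummom : Integrable (fun ω => |S ω + Y ω| ^ r) P :=
    vbe_integrable_add hr1 hSm hYm hSmom hYmom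
  set g : ℝ → ℝ := fun x => Real.sign x * |x| ^ (r - 1) with hg
  have hgm : Measurable g := by
    apply vbe_sign_measurable.mul
    exact (Real.continuous_rpow_const (by linarith)).measurable.comp measurable_abs
  have hGm : Measurable fun ω => g (S ω) := hgm.comp hSm
  have hGbound : ∀ ω, ‖g (S ω)‖ ≤ ‖1 + |S ω|‖ := by
    intro ω
    simp only [Real.norm_eq_abs, hg]
    have habs : |Real.sign (S ω)| ≤ 1 := by
      rcases lt_trichotomy (S ω) 0 with h | h | h
      · rw [Real.sign_of_neg h]; norm_num
      · rw [h, Real.sign_zero]; norm_num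
      · rw [Real.sign_of_pos h]; norm_num
    have hpow : |S ω| ^ (r - 1) ≤ 1 + |S ω| := by
      rcases le_total |S ω| 1 with h | h
      · have := Real.rpow_le_one (abs_nonneg _) h (by linarith : (0:ℝ) ≤ r - 1)
        linarith [abs_nonneg (S ω)]
      · have h2 : |S ω| ^ (r - 1) ≤ |S ω| ^ (1:ℝ) :=
          Real.rpow_le_rpow_of_exponent_le h (by linarith)
        rw [Real.rpow_one] at h2
        linarith
    have hpow_nonneg : (0:ℝ) ≤ |S ω| ^ (r - 1) := Real.rpow_nonneg (abs_nonneg _) _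
    calc |Real.sign (S ω) * |S ω| ^ (r - 1)| = |Real.sign (S ω)| * |(|S ω| ^ (r - 1))| :=
          abs_mul _ _
      _ ≤ 1 * (1 + |S ω|) := by
          apply mul_le_mul habs _ (abs_nonneg _) (by norm_num)
          rw [abs_of_nonneg hpow_nonneg]
          exact hpow
      _ = 1 + |S ω| := one_mul _
      _ ≤ |(1 + |S ω|)| := le_abs_self _
  have haux : Integrable (fun ω => 1 + |S ω|) P := (integrable_const (1:ℝ)).add hSint.abs
  have hGint : Integrable (fun ω => g (S ω)) P :=
    haux.mono hGm.aestronglyMeasurable (Filter.Eventually.of_forall hGbound)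
  have hindepG : IndepFun (fun ω => g (S ω)) Y P := hindep.comp hgm measurable_id
  have hGYint : Integrable (fun ω => g (S ω) * Y ω) P :=
    hindepG.integrable_mul hGint hYint
  have hGYzero : ∫ ω, g (S ω) * Y ω ∂P = 0 := by
    rw [hindepG.integral_fun_mul_eq_mul_integral hGm.aestronglyMeasurable hYm.aestronglyMeasurable, hYmean, mul_zero]
  have hptwise : ∀ ω, |S ω + Y ω| ^ r
      ≤ |S ω| ^ r + r * (g (S ω) * Y ω) + 2 * |Y ω| ^ r := by
    intro ω
    have h := vbe_ptwise hr1 hr2 (S ω) (Y ω)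
    simp only [hg]
    calc |S ω + Y ω| ^ r
        ≤ |S ω| ^ r + r * (Real.sign (S ω) * |S ω| ^ (r - 1) * Y ω) + 2 * |Y ω| ^ r := h
      _ = |S ω| ^ r + r * (Real.sign (S ω) * |S ω| ^ (r - 1) * Y ω) + 2 * |Y ω| ^ r := rfl
  have hrint : Integrable (fun ω => |S ω| ^ r + r * (g (S ω) * Y ω) + 2 * |Y ω| ^ r) P :=
    (hSmom.add (hGYint.const_mul r)).add (hYmom.const_mul 2)
  have hmono := integral_mono hSummom hrint hptwise
  have hsplit : ∫ ω, (|S ω| ^ r + r * (g (S ω) * Y ω) + 2 * |Y ω| ^ r) ∂P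
      = (∫ ω, |S ω| ^ r ∂P) + r * (∫ ω, g (S ω) * Y ω ∂P) + 2 * ∫ ω, |Y ω| ^ r ∂P := by
    have e1 : ∫ ω, (|S ω| ^ r + r * (g (S ω) * Y ω) + 2 * |Y ω| ^ r) ∂P
        = (∫ ω, (|S ω| ^ r + r * (g (S ω) * Y ω)) ∂P) + ∫ ω, 2 * |Y ω| ^ r ∂P :=
      integral_add (hSmom.add (hGYint.const_mul r)) (hYmom.const_mul 2)
    have e2 : ∫ ω, (|S ω| ^ r + r * (g (S ω) * Y ω)) ∂P
        = (∫ ω, |S ω| ^ r ∂P) + ∫ ω, r * (g (S ω) * Y ω) ∂P :=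
      integral_add hSmom (hGYint.const_mul r)
    rw [e1, e2, integral_const_mul, integral_const_mul]
  rw [hsplit, hGYzero, mul_zero, add_zero] at hmono
  exact hmono

/-- von Bahr–Esseen: for independent mean-zero X₁,…,Xₙ with finite r-th
moments, 1 ≤ r ≤ 2, E|Sₙ|^r ≤ 2 ∑ E|Xᵢ|^r. -/
theorem stmt_3 {Ω : Type*} [MeasurableSpace Ω] (P : Measure Ω) [IsProbabilityMeasure P]
    (n : ℕ) (r : ℝ) (hr1 : 1 ≤ r) (hr2 : r ≤ 2)
    (X : Fin n → Ω → ℝ) (hmeas : ∀ i, Measurable (X i))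
    (hindep : iIndepFun X P)
    (hint : ∀ i, Integrable (X i) P)
    (hmom : ∀ i, Integrable (fun ω => |X i ω| ^ r) P)
    (hmean : ∀ i, ∫ ω, X i ω ∂P = 0) :
    ∫ ω, |∑ i, X i ω| ^ r ∂P ≤ 2 * ∑ i, ∫ ω, |X i ω| ^ r ∂P := by
  have hr0 : r ≠ 0 := by linarith
  have key : ∀ s : Finset (Fin n),
      Integrable (fun ω => |∑ i ∈ s, X i ω| ^ r) P ∧
      ∫ ω, |∑ i ∈ s, X i ω| ^ r ∂P ≤ 2 * ∑ i ∈ s, ∫ ω, |X i ω| ^ r ∂P := by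
    intro s
    induction s using Finset.induction_on with
    | empty =>
      constructor
      · simp only [Finset.sum_empty, abs_zero, Real.zero_rpow hr0]
        exact integrable_const 0
      · simp [Real.zero_rpow hr0]
    | @insert i s hi ih =>
      have hSm : Measurable fun ω => ∑ j ∈ s, X j ω :=
        Finset.measurable_sum s fun j _ => hmeas j
      have hSint : Integrable (fun ω => ∑ j ∈ s, X j ω) P :=
        integrable_finset_sum s fun j _ => hint j
      have hindep' : IndepFun (fun ω => ∑ j ∈ s, X j ω) (X i) P := by
        have h := hindep.indepFun_finsetSum_of_notMem hmeas hi
        have heq : (∑ j ∈ s, X j) = fun ω => ∑ j ∈ s, X j ω := by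
          funext ω; simp [Finset.sum_apply]
        rwa [heq] at h
      have hsummom : Integrable (fun ω => |(∑ j ∈ s, X j ω) + X i ω| ^ r) P :=
        vbe_integrable_add hr1 hSm (hmeas i) ih.1 (hmom i)
      have hstep := vbe_step P hr1 hr2 hSm (hmeas i) hindep' hSint (hint i) ih.1 (hmom i)
        (hmean i)
      have hcomm : (fun ω => |∑ j ∈ insert i s, X j ω| ^ r)
          = fun ω => |(∑ j ∈ s, X j ω) + X i ω| ^ r := by
        funext ω
        rw [Finset.sum_insert hi, add_comm]
      constructor
      · rw [hcomm]; exact hsummom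
      · rw [hcomm]
        calc ∫ ω, |(∑ j ∈ s, X j ω) + X i ω| ^ r ∂P
            ≤ (∫ ω, |∑ j ∈ s, X j ω| ^ r ∂P) + 2 * ∫ ω, |X i ω| ^ r ∂P := hstep
          _ ≤ 2 * (∑ j ∈ s, ∫ ω, |X j ω| ^ r ∂P) + 2 * ∫ ω, |X i ω| ^ r ∂P := by
              linarith [ih.2]
          _ = 2 * ∑ j ∈ insert i s, ∫ ω, |X j ω| ^ r ∂P := by
              rw [Finset.sum_insert hi]; ring
  exact (key Finset.univ).2
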